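/- Let a_n → 0 be a sequence of nonnegative reals and let r_n → ∞ be any sequence of positive reals. Then there exists a continuous, strictly increasing function q : ℝ≥0 → ℝ≥0 with q(0) = 0 and q(t) > 0 for t > 0 such that r_n · q(a_n) → 0. -/

import Mathlib

open Filter Topology
open scoped ENNReal

/-!
Let `W t = sup {|r n| : t ≤ a n}`. Since `a n → 0`, only finitely many `n` enter the supremum when
`t > 0`, so `W` is finite there, and it is antitone. Hence `φ = 1 / (1 + W)` is monotone, positive
on `(0, ∞)`, and `|r n| * φ (a n) ≤ 1`. The primitive `q t = ∫₀ᵗ φ` is continuous, strictly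
increasing on `[0, ∞)`, and `q t ≤ t * φ t` by monotonicity of `φ`, so `|r n * q (a n)| ≤ a n → 0`.
-/

/-- Valued in `ℝ≥0∞`, so that it is antitone on all of `ℝ`: for `t ≤ 0` it may be `∞`. -/
noncomputable def worstRate (a r : ℕ → ℝ) (t : ℝ) : ℝ≥0∞ :=
  ⨆ (n) (_ : t ≤ a n), ‖r n‖ₑ

lemma worstRate_antitone (a r : ℕ → ℝ) : Antitone (worstRate a r) :=
  fun _ _ hst => iSup₂_mono' fun n hn => ⟨n, hst.trans hn, le_rfl⟩

lemma enorm_le_worstRate (a r : ℕ → ℝ) (n : ℕ) : ‖r n‖ₑ ≤ worstRate a r (a n) :=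
  le_iSup₂ (f := fun m (_ : a n ≤ a m) => ‖r m‖ₑ) n le_rfl

lemma worstRate_lt_top {a : ℕ → ℝ} (ha : Tendsto a atTop (𝓝 0)) (r : ℕ → ℝ) {t : ℝ}
    (ht : 0 < t) : worstRate a r t < ∞ := by
  obtain ⟨N, hN⟩ := eventually_atTop.mp (ha.eventually_lt_const ht)
  calc worstRate a r t ≤ ∑ n ∈ Finset.range N, ‖r n‖ₑ :=
        iSup₂_le fun n hn => Finset.single_le_sum (f := fun n => ‖r n‖ₑ) (fun _ _ => zero_le)
          (Finset.mem_range.mpr (lt_of_not_ge fun h => (hN n h).not_ge hn))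
    _ < ∞ := ENNReal.sum_lt_top.mpr fun _ _ => enorm_lt_top

noncomputable def rateWeight (a r : ℕ → ℝ) (t : ℝ) : ℝ :=
  (1 + worstRate a r t)⁻¹.toReal

lemma rateWeight_monotone (a r : ℕ → ℝ) : Monotone (rateWeight a r) := fun _ _ hst =>
  ENNReal.toReal_mono (by simp)
    (ENNReal.inv_le_inv.mpr (add_le_add_right (worstRate_antitone a r hst) 1))

lemma rateWeight_pos {a : ℕ → ℝ} (ha : Tendsto a atTop (𝓝 0)) (r : ℕ → ℝ) {t : ℝ}
    (ht : 0 < t) : 0 < rateWeight a r t :=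
  ENNReal.toReal_pos (by simpa using (worstRate_lt_top ha r ht).ne) (by simp)

lemma abs_mul_rateWeight_le_one (a r : ℕ → ℝ) (n : ℕ) : |r n| * rateWeight a r (a n) ≤ 1 := by
  have h : ‖r n‖ₑ / (1 + worstRate a r (a n)) ≤ 1 :=
    ENNReal.div_le_of_le_mul ((enorm_le_worstRate a r n).trans (by simp))
  rw [← Real.norm_eq_abs, ← toReal_enorm, rateWeight, ← ENNReal.toReal_mul]
  exact ENNReal.toReal_le_of_le_ofReal zero_le_one (by simpa [div_eq_mul_inv] using h)

lemma strictMonoOn_integral_of_monotone {φ : ℝ → ℝ} (hφ : Monotone φ)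
    (hpos : ∀ t, 0 < t → 0 < φ t) :
    StrictMonoOn (fun t => ∫ u in 0..t, φ u) (Set.Ici 0) := by
  intro x hx y _ hxy
  have h := intervalIntegral.intervalIntegral_pos_of_pos_on hφ.intervalIntegrable
    (fun u hu => hpos u ((Set.mem_Ici.mp hx).trans_lt hu.1)) hxy
  rw [← intervalIntegral.integral_interval_sub_left hφ.intervalIntegrable
    hφ.intervalIntegrable] at h
  simpa using h

lemma integral_le_mul_of_monotone {φ : ℝ → ℝ} (hφ : Monotone φ) {t : ℝ} (ht : 0 ≤ t) :
    ∫ u in 0..t, φ u ≤ t * φ t := by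
  simpa using intervalIntegral.integral_mono_on ht hφ.intervalIntegrable
    (intervalIntegrable_const (μ := MeasureTheory.volume)) fun u hu => hφ hu.2

theorem stmt_6_general (a : ℕ → ℝ) (ha_nonneg : ∀ n, 0 ≤ a n)
    (ha : Tendsto a atTop (nhds 0))
    (r : ℕ → ℝ) :
    ∃ q : ℝ → ℝ,
      ContinuousOn q (Set.Ici 0) ∧
      StrictMonoOn q (Set.Ici 0) ∧
      q 0 = 0 ∧
      (∀ t, 0 < t → 0 < q t) ∧
      (∀ t, 0 ≤ t → 0 ≤ q t) ∧
      Tendsto (fun n => r n * q (a n)) atTop (nhds 0) := by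
  set φ := rateWeight a r
  have hφ : Monotone φ := rateWeight_monotone a r
  have hq_mono := strictMonoOn_integral_of_monotone hφ fun t ht => rateWeight_pos ha r ht
  have hq0 : ∫ u in (0 : ℝ)..0, φ u = 0 := intervalIntegral.integral_same
  have hq_nonneg : ∀ t, 0 ≤ t → 0 ≤ ∫ u in 0..t, φ u := fun t ht =>
    hq0.symm.trans_le <| hq_mono.monotoneOn Set.self_mem_Ici ht ht
  refine ⟨fun t => ∫ u in 0..t, φ u,
    (intervalIntegral.continuous_primitive (fun _ _ => hφ.intervalIntegrable) 0).continuousOn,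
    hq_mono, hq0, fun t ht => hq0.symm.trans_lt <| hq_mono Set.self_mem_Ici ht.le ht, hq_nonneg, ?_⟩
  refine squeeze_zero_norm (fun n => ?_) ha
  calc ‖r n * ∫ u in 0..a n, φ u‖ = |r n| * ∫ u in 0..a n, φ u := by
        rw [norm_mul, Real.norm_eq_abs, Real.norm_of_nonneg (hq_nonneg _ (ha_nonneg n))]
    _ ≤ |r n| * (a n * φ (a n)) :=
        mul_le_mul_of_nonneg_left (integral_le_mul_of_monotone hφ (ha_nonneg n)) (abs_nonneg _)
    _ = a n * (|r n| * φ (a n)) := by ring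
    _ ≤ a n := mul_le_of_le_one_right (ha_nonneg n) (abs_mul_rateWeight_le_one a r n)

/-- For any null sequence `a_n ≥ 0` and any rate `r_n → ∞` there is a continuous,
strictly increasing `q : ℝ≥0 → ℝ≥0` with `q 0 = 0`, `q t > 0` for `t > 0`, such that
`r_n · q(a_n) → 0`. -/
theorem stmt_6 (a : ℕ → ℝ) (ha_nonneg : ∀ n, 0 ≤ a n)
    (ha : Tendsto a atTop (nhds 0))
    (r : ℕ → ℝ) (hr_pos : ∀ n, 0 < r n)
    (hr : Tendsto r atTop atTop) :
    ∃ q : ℝ → ℝ,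
      ContinuousOn q (Set.Ici 0) ∧
      StrictMonoOn q (Set.Ici 0) ∧
      q 0 = 0 ∧
      (∀ t, 0 < t → 0 < q t) ∧
      (∀ t, 0 ≤ t → 0 ≤ q t) ∧
      Tendsto (fun n => r n * q (a n)) atTop (nhds 0) :=
  stmt_6_general a ha_nonneg ha r
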